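/- arXiv:1605.08013 — 2 statements merged into one kernel-verified Lean document; each statement's English description precedes it below -/
import Mathlib

section
/- Let F̂ be an r-pattern of K_k and let G be an (r,F̂)-extremal graph on n vertices. If u, v ∈ V(G) are non-adjacent vertices, then the graph obtained from G by deleting v and adding a new vertex that is a twin of u (non-adjacent to u and adjacent exactly to the neighbors of u) is also an (r,F̂)-extremal graph on n vertices. -/
open SimpleGraph

/-- A (not necessarily proper) `r`-edge-coloring of a graph `G`, encoded as a symmetric
function on ordered pairs of vertices whose value on non-adjacent pairs is pinned to `0`. -/
def IsEdgeColoring {V : Type*} {r : ℕ} (G : SimpleGraph V) (c : V → V → Fin r) : Prop :=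
  (∀ u v, c u v = c v u) ∧ ∀ u v, ¬ G.Adj u v → (c u v).1 = 0

/-- The coloring `c` of `G` contains a copy of the pattern `p` of the complete graph `K_k`
with all vertices inside the set `A`: there is an injective map `f` of `Fin k` into `A`
whose image is a clique of `G` and such that two edges of the copy get equal colors
exactly when the corresponding edges of `K_k` lie in the same class of the pattern. -/
def ContainsPatternOn {V : Type*} {k r s : ℕ} (G : SimpleGraph V) (A : Set V)
    (p : Fin k → Fin k → Fin s) (c : V → V → Fin r) : Prop :=
  ∃ f : Fin k → V, (∀ i, f i ∈ A) ∧ Function.Injective f ∧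
    (∀ i j, i ≠ j → G.Adj (f i) (f j)) ∧
    ∀ i j i' j', i ≠ j → i' ≠ j' →
      (c (f i) (f j) = c (f i') (f j') ↔ p i j = p i' j')

/-- The coloring `c` of `G` contains a copy of the pattern `p`. -/
def ContainsPattern {V : Type*} {k r s : ℕ} (G : SimpleGraph V)
    (p : Fin k → Fin k → Fin s) (c : V → V → Fin r) : Prop :=
  ContainsPatternOn G Set.univ p c

/-- `c_{r,p}(G)`: the number of `p`-free `r`-edge-colorings of `G`. -/
noncomputable def colCount {V : Type*} {k s : ℕ} (r : ℕ) (p : Fin k → Fin k → Fin s)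
    (G : SimpleGraph V) : ℕ :=
  Nat.card {c : V → V → Fin r // IsEdgeColoring G c ∧ ¬ ContainsPattern G p c}

/-- `G` is `(r,p)`-extremal: it admits at least as many `p`-free `r`-edge-colorings as any
graph on the same number of vertices. -/
def IsExtremalGraph {V : Type*} [Fintype V] {k s : ℕ} (r : ℕ)
    (p : Fin k → Fin k → Fin s) (G : SimpleGraph V) : Prop :=
  ∀ H : SimpleGraph (Fin (Fintype.card V)), colCount r p H ≤ colCount r p G

/-!
Zykov symmetrization. Let `G_{s,t}` be the graph in which the non-adjacent vertices `u` and `v`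
have neighbourhoods `s` and `t` on top of a common core (the rest of `G`). A copy of the pattern
is a clique, so it never contains both `u` and `v`. Hence a `p`-free colouring of `G_{s,t}` is a
colouring `b` of the core together with two independent extensions, one at `u` (depending only
on `s`) and one at `v` (depending only on `t`; by the symmetry exchanging `u` and `v` it is
counted by the same function as an extension at `u`). So `c(G_{s,t}) = ∑_b X_s(b) X_t(b)`, and
Cauchy–Schwarz gives `c(G_{s,t})² ≤ c(G_{s,s}) c(G_{t,t})`. For `s = N(u)`, `t = N(v)` we have
`G = G_{s,t}`, `G' = G_{s,s}` and, by extremality, `c(G_{t,t}) ≤ c(G)`; thus `c(G) ≤ c(G')`.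
-/

namespace ContainsPatternOn

variable {V W : Type*} {k r s : ℕ} {G : SimpleGraph V} {H : SimpleGraph W} {A B : Set V}
  {p : Fin k → Fin k → Fin s} {c : V → V → Fin r}

theorem mono (hAB : A ⊆ B) (h : ContainsPatternOn G A p c) : ContainsPatternOn G B p c :=
  let ⟨f, hA, hf⟩ := h
  ⟨f, fun i => hAB (hA i), hf⟩

theorem congr {G' : SimpleGraph V} {c' : V → V → Fin r}
    (hG : ∀ x ∈ A, ∀ y ∈ A, G.Adj x y ↔ G'.Adj x y) (hc : ∀ x ∈ A, ∀ y ∈ A, c x y = c' x y) :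
    ContainsPatternOn G A p c ↔ ContainsPatternOn G' A p c' := by
  refine exists_congr fun f => and_congr_right fun hA => and_congr_right fun _ => ?_
  simp only [hG _ (hA _) _ (hA _), hc _ (hA _) _ (hA _)]

theorem map (φ : G →g H) (hφ : Function.Injective φ) {c' : W → W → Fin r}
    (hc : ∀ x y, c' (φ x) (φ y) = c x y) (h : ContainsPatternOn G A p c) :
    ContainsPatternOn H (φ '' A) p c' := by
  obtain ⟨f, hA, hinj, hadj, hcol⟩ := h
  refine ⟨φ ∘ f, fun i => Set.mem_image_of_mem φ (hA i), hφ.comp hinj,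
    fun i j hij => φ.map_adj (hadj i j hij), fun i j i' j' hij hij' => ?_⟩
  simpa only [Function.comp_apply, hc] using hcol i j i' j' hij hij'

theorem iso_iff (e : G ≃g H) {c' : W → W → Fin r} (hc : ∀ x y, c' (e x) (e y) = c x y) :
    ContainsPatternOn H (e '' A) p c' ↔ ContainsPatternOn G A p c := by
  refine ⟨fun h => ?_, map e.toHom e.injective hc⟩
  have hc' : ∀ x y, c (e.symm x) (e.symm y) = c' x y := fun x y => by
    simpa using (hc (e.symm x) (e.symm y)).symm
  simpa [Set.image_image] using map e.symm.toHom e.symm.injective hc' h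

end ContainsPatternOn

theorem containsPattern_iff_of_not_adj {V : Type*} {k r s : ℕ} {G : SimpleGraph V}
    {p : Fin k → Fin k → Fin s} {c : V → V → Fin r} {u v : V} (huv : u ≠ v)
    (hnadj : ¬ G.Adj u v) :
    ContainsPattern G p c ↔ ContainsPatternOn G {v}ᶜ p c ∨ ContainsPatternOn G {u}ᶜ p c := by
  refine ⟨fun ⟨f, _, hf⟩ => ?_, fun h => h.elim (·.mono (Set.subset_univ _))
    (·.mono (Set.subset_univ _))⟩
  by_cases hv : ∃ i, f i = v
  · obtain ⟨i₀, hi₀⟩ := hv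
    refine Or.inr ⟨f, fun i (hi : f i = u) => hnadj ?_, hf⟩
    have hne : i ≠ i₀ := fun h => huv (by rw [← hi, h, hi₀])
    simpa [hi, hi₀] using hf.2.1 i i₀ hne
  · exact Or.inl ⟨f, fun i hi => hv ⟨i, hi⟩, hf⟩

theorem isEdgeColoring_iso_iff {V W : Type*} {r : ℕ} {G : SimpleGraph V} {H : SimpleGraph W}
    (e : G ≃g H) {c : V → V → Fin r} {c' : W → W → Fin r}
    (hc : ∀ x y, c' (e x) (e y) = c x y) : IsEdgeColoring H c' ↔ IsEdgeColoring G c := by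
  simp only [IsEdgeColoring, ← e.toEquiv.forall_congr_right, RelIso.coe_fn_toEquiv, hc,
    e.map_adj_iff]

theorem colCount_congr {V W : Type*} {k r s : ℕ} (p : Fin k → Fin k → Fin s)
    {G : SimpleGraph V} {H : SimpleGraph W} (e : G ≃g H) : colCount r p G = colCount r p H := by
  let Φ : (V → V → Fin r) ≃ (W → W → Fin r) :=
    e.toEquiv.arrowCongr (e.toEquiv.arrowCongr (.refl _))
  have hΦ : ∀ c x y, Φ c (e x) (e y) = c x y := fun c x y => by
    simp [Φ, ← RelIso.coe_fn_toEquiv]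
  refine Nat.card_congr (Φ.subtypeEquiv fun c => and_congr ?_ (not_congr ?_))
  · exact (isEdgeColoring_iso_iff e (hΦ c)).symm
  · simpa only [ContainsPattern, Set.image_univ_of_surjective e.surjective] using
      (ContainsPatternOn.iso_iff e (A := Set.univ) (hΦ c)).symm

theorem IsExtremalGraph.colCount_le {V : Type*} [Fintype V] {k r s : ℕ}
    {p : Fin k → Fin k → Fin s} {G : SimpleGraph V} (hG : IsExtremalGraph r p G)
    (H : SimpleGraph V) : colCount r p H ≤ colCount r p G :=
  (colCount_congr p (H.overFinIso rfl)).trans_le (hG _)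

section Recolor

variable {V : Type*} {r : ℕ} {H H' : SimpleGraph V} {c : V → V → Fin r}

theorem IsEdgeColoring.apply_eq_zero [NeZero r] (hc : IsEdgeColoring H c) {x y : V}
    (h : ¬ H.Adj x y) : c x y = 0 :=
  Fin.ext (hc.2 x y h)

theorem IsEdgeColoring.support_subset [NeZero r] (hc : IsEdgeColoring H c) (x : V) :
    Function.support (c x) ⊆ H.neighborSet x :=
  fun _ hy => by_contra fun h => hy (hc.apply_eq_zero h)

variable [DecidableEq V]

def recolorAt (w : V) (a : V → Fin r) (b : V → V → Fin r) : V → V → Fin r :=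
  fun x y => if x = w then a y else if y = w then a x else b x y

def glueAt (u v : V) (b : V → V → Fin r) (au av : V → Fin r) : V → V → Fin r :=
  recolorAt u au (recolorAt v av b)

theorem glueAt_apply_left {u v : V} {b : V → V → Fin r} {au av : V → Fin r} :
    glueAt u v b au av u = au := by
  funext y
  simp [glueAt, recolorAt]

theorem glueAt_apply_right {u v : V} (huv : u ≠ v) {b : V → V → Fin r} {au av : V → Fin r}
    (hau : au v = av u) : glueAt u v b au av v = av := by
  funext y
  by_cases hy : y = u <;> simp_all [glueAt, recolorAt, huv.symm]

variable [NeZero r]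

def stripAt (u v : V) (c : V → V → Fin r) : V → V → Fin r :=
  recolorAt u 0 (recolorAt v 0 c)

theorem glueAt_stripAt {u v : V} (hc : ∀ x y, c x y = c y x) :
    glueAt u v (stripAt u v c) (c u) (c v) = c := by
  funext x y
  unfold glueAt stripAt recolorAt
  split_ifs <;> simp_all

theorem stripAt_glueAt {u v : V} {b : V → V → Fin r} {au av : V → Fin r}
    (hu : ∀ y, b u y = 0 ∧ b y u = 0) (hv : ∀ y, b v y = 0 ∧ b y v = 0) :
    stripAt u v (glueAt u v b au av) = b := by
  funext x y
  unfold glueAt stripAt recolorAt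
  split_ifs <;> simp_all

theorem IsEdgeColoring.recolorAt {b : V → V → Fin r} {w : V} {a : V → Fin r}
    (hb : IsEdgeColoring H b) (hHH' : ∀ x y, x ≠ w → y ≠ w → H.Adj x y → H'.Adj x y)
    (ha : Function.support a ⊆ H'.neighborSet w) : IsEdgeColoring H' (recolorAt w a b) := by
  refine ⟨fun x y => ?_, fun x y hxy => ?_⟩
  · unfold _root_.recolorAt
    split_ifs <;> simp_all [hb.1 x y]
  · suffices _root_.recolorAt w a b x y = 0 from congrArg Fin.val this
    unfold _root_.recolorAt
    split_ifs with hx hy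
    · subst hx
      exact Function.notMem_support.1 fun h => hxy (ha h)
    · subst hy
      exact Function.notMem_support.1 fun h => hxy (ha h).symm
    · exact hb.apply_eq_zero fun h => hxy (hHH' x y hx hy h)

end Recolor

namespace SimpleGraph

variable {V : Type*} (G : SimpleGraph V) {u v : V} {s t : Set V}

/-- All edges of `G` at `u` and `v` are removed, then `u` is joined to `s` and `v` to `t`. -/
def replaceNbhds (u v : V) (s t : Set V) : SimpleGraph V :=
  fromRel fun x y => (x ≠ u ∧ x ≠ v ∧ y ≠ u ∧ y ≠ v ∧ G.Adj x y) ∨ (x = u ∧ y ∈ s) ∨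
    (x = v ∧ y ∈ t)

theorem replaceNbhds_comm : G.replaceNbhds v u t s = G.replaceNbhds u v s t := by
  ext x y
  simp only [replaceNbhds, fromRel_adj]
  tauto

theorem replaceNbhds_adj_iff_of_ne_right {x y : V} (hx : x ≠ v) (hy : y ≠ v) :
    (G.replaceNbhds u v s t).Adj x y ↔ (G.replaceNbhds u v s ∅).Adj x y := by
  simp [replaceNbhds, hx, hy]

theorem neighborSet_replaceNbhds_left (huv : u ≠ v) (hus : u ∉ s) (hut : u ∉ t) :
    (G.replaceNbhds u v s t).neighborSet u = s := by
  ext y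
  simp only [mem_neighborSet, replaceNbhds, fromRel_adj]
  aesop

theorem replaceNbhds_not_adj (hvs : v ∉ s) (hut : u ∉ t) : ¬ (G.replaceNbhds u v s t).Adj u v := by
  simp only [replaceNbhds, fromRel_adj]
  rintro ⟨-, h⟩
  aesop

theorem eq_replaceNbhds {H : SimpleGraph V} (huv : u ≠ v) (hus : u ∉ s) (hvs : v ∉ s)
    (hut : u ∉ t) (hvt : v ∉ t)
    (hH : ∀ x y, x ≠ u → x ≠ v → y ≠ u → y ≠ v → (H.Adj x y ↔ G.Adj x y))
    (hHu : H.neighborSet u = s) (hHv : H.neighborSet v = t) :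
    H = G.replaceNbhds u v s t := by
  have hu := neighborSet_replaceNbhds_left G huv hus hut
  have hv := neighborSet_replaceNbhds_left G huv.symm hvt hvs
  rw [replaceNbhds_comm] at hv
  ext x y
  rcases eq_or_ne x u with rfl | hxu
  · exact Set.ext_iff.1 (hHu.trans hu.symm) y
  rcases eq_or_ne y u with rfl | hyu
  · simpa only [mem_neighborSet, adj_comm] using Set.ext_iff.1 (hHu.trans hu.symm) x
  rcases eq_or_ne x v with rfl | hxv
  · exact Set.ext_iff.1 (hHv.trans hv.symm) y
  rcases eq_or_ne y v with rfl | hyv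
  · simpa only [mem_neighborSet, adj_comm] using Set.ext_iff.1 (hHv.trans hv.symm) x
  simp only [hH x y hxu hxv hyu hyv, replaceNbhds, fromRel_adj, G.adj_comm y x]
  simpa [hxu, hyu, hxv, hyv] using G.ne_of_adj

theorem replaceNbhds_mono {s' t' : Set V} (hs : s ⊆ s') (ht : t ⊆ t') :
    G.replaceNbhds u v s t ≤ G.replaceNbhds u v s' t' := by
  intro x y
  simp only [replaceNbhds, fromRel_adj]
  aesop

def replaceNbhdsSwapIso [DecidableEq V] (hus : u ∉ s) (hvs : v ∉ s) (hut : u ∉ t)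
    (hvt : v ∉ t) :
    G.replaceNbhds u v s t ≃g G.replaceNbhds v u s t where
  toEquiv := Equiv.swap u v
  map_rel_iff' {x y} := by
    simp only [replaceNbhds, fromRel_adj, Equiv.swap_apply_def]
    split_ifs <;> subst_vars <;> aesop

end SimpleGraph

section FreeColorings

variable {V : Type*} {r k m : ℕ} {p : Fin k → Fin k → Fin m} {G : SimpleGraph V} {u v : V}
  {s t : Set V}

abbrev FreeColoring (r : ℕ) (p : Fin k → Fin k → Fin m) (H : SimpleGraph V) : Type _ :=
  {c : V → V → Fin r // IsEdgeColoring H c ∧ ¬ ContainsPattern H p c}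

theorem IsEdgeColoring.apply_left_eq_zero [NeZero r] {b : V → V → Fin r} (huv : u ≠ v)
    (hb : IsEdgeColoring (G.replaceNbhds u v ∅ ∅) b) (y : V) : b u y = 0 ∧ b y u = 0 := by
  have h : ¬ (G.replaceNbhds u v ∅ ∅).Adj u y := by
    simp [← mem_neighborSet, neighborSet_replaceNbhds_left G huv]
  exact ⟨hb.apply_eq_zero h, hb.apply_eq_zero (h ∘ Adj.symm)⟩

theorem IsEdgeColoring.apply_right_eq_zero [NeZero r] {b : V → V → Fin r} (huv : u ≠ v)
    (hb : IsEdgeColoring (G.replaceNbhds u v ∅ ∅) b) (y : V) : b v y = 0 ∧ b y v = 0 := by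
  rw [← replaceNbhds_comm] at hb
  exact hb.apply_left_eq_zero huv.symm y

theorem IsEdgeColoring.support_subset_left [NeZero r] (huv : u ≠ v) (hus : u ∉ s) (hut : u ∉ t)
    {c : V → V → Fin r} (hc : IsEdgeColoring (G.replaceNbhds u v s t) c) :
    Function.support (c u) ⊆ s :=
  neighborSet_replaceNbhds_left G huv hus hut ▸ hc.support_subset u

theorem IsEdgeColoring.support_subset_right [NeZero r] (huv : u ≠ v) (hvs : v ∉ s) (hvt : v ∉ t)
    {c : V → V → Fin r} (hc : IsEdgeColoring (G.replaceNbhds u v s t) c) :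
    Function.support (c v) ⊆ t := by
  rw [← replaceNbhds_comm] at hc
  exact hc.support_subset_left huv.symm hvt hvs

variable [DecidableEq V]

theorem not_containsPattern_glueAt_iff (huv : u ≠ v) (hvs : v ∉ s) (hut : u ∉ t)
    (b : V → V → Fin r) (au av : V → Fin r) :
    ¬ ContainsPattern (G.replaceNbhds u v s t) p (glueAt u v b au av) ↔
      ¬ ContainsPatternOn (G.replaceNbhds u v s ∅) {v}ᶜ p (recolorAt u au b) ∧
      ¬ ContainsPatternOn (G.replaceNbhds v u t ∅) {u}ᶜ p (recolorAt v av b) := by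
  rw [containsPattern_iff_of_not_adj huv (replaceNbhds_not_adj G hvs hut), not_or]
  refine and_congr (not_congr (ContainsPatternOn.congr (fun x hx y hy => ?_) fun x hx y hy => ?_))
    (not_congr (ContainsPatternOn.congr (fun x hx y hy => ?_) fun x hx y hy => ?_))
  · exact replaceNbhds_adj_iff_of_ne_right G hx hy
  · simp_all [glueAt, recolorAt]
  · rw [← replaceNbhds_comm]
    exact replaceNbhds_adj_iff_of_ne_right G hx hy
  · simp_all [glueAt, recolorAt]

variable [NeZero r]

variable (p G) in
def IsFreeExtension (u v : V) (s : Set V) (b : V → V → Fin r) (a : V → Fin r) : Prop :=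
  Function.support a ⊆ s ∧ ¬ ContainsPatternOn (G.replaceNbhds u v s ∅) {v}ᶜ p (recolorAt u a b)

theorem isEdgeColoring_glueAt (huv : u ≠ v) (hus : u ∉ s) (hut : u ∉ t)
    (hvt : v ∉ t) {b : V → V → Fin r} {au av : V → Fin r}
    (hb : IsEdgeColoring (G.replaceNbhds u v ∅ ∅) b) (hau : Function.support au ⊆ s)
    (hav : Function.support av ⊆ t) :
    IsEdgeColoring (G.replaceNbhds u v s t) (glueAt u v b au av) := by
  unfold glueAt
  have hv : IsEdgeColoring (G.replaceNbhds u v ∅ t) (recolorAt v av b) := by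
    refine hb.recolorAt (fun x y _ _ h => replaceNbhds_mono G subset_rfl (Set.empty_subset t) h) ?_
    rwa [← replaceNbhds_comm, neighborSet_replaceNbhds_left G huv.symm hvt (Set.notMem_empty v)]
  refine hv.recolorAt (fun x y _ _ h => replaceNbhds_mono G (Set.empty_subset s) subset_rfl h) ?_
  rwa [neighborSet_replaceNbhds_left G huv hus hut]

theorem isEdgeColoring_stripAt {c : V → V → Fin r}
    (hc : IsEdgeColoring (G.replaceNbhds u v s t) c) :
    IsEdgeColoring (G.replaceNbhds u v ∅ ∅) (stripAt u v c) := by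
  unfold stripAt
  have hv : IsEdgeColoring (G.replaceNbhds u v s ∅) (recolorAt v 0 c) :=
    hc.recolorAt (fun x y hx hy h => (replaceNbhds_adj_iff_of_ne_right G hx hy).1 h) (by simp)
  refine hv.recolorAt (fun x y hx hy h => ?_) (by simp)
  rw [← replaceNbhds_comm] at h ⊢
  exact (replaceNbhds_adj_iff_of_ne_right G hx hy).1 h

theorem not_containsPattern_iff_of_stripAt_eq (huv : u ≠ v) (hvs : v ∉ s) (hut : u ∉ t)
    {c b : V → V → Fin r} (hc : IsEdgeColoring (G.replaceNbhds u v s t) c)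
    (hcb : stripAt u v c = b) :
    ¬ ContainsPattern (G.replaceNbhds u v s t) p c ↔
      ¬ ContainsPatternOn (G.replaceNbhds u v s ∅) {v}ᶜ p (recolorAt u (c u) b) ∧
      ¬ ContainsPatternOn (G.replaceNbhds v u t ∅) {u}ᶜ p (recolorAt v (c v) b) := by
  conv_lhs => rw [← glueAt_stripAt hc.1, hcb]
  exact not_containsPattern_glueAt_iff huv hvs hut b (c u) (c v)

def stripFree (c : FreeColoring r p (G.replaceNbhds u v s t)) :
    {b : V → V → Fin r // IsEdgeColoring (G.replaceNbhds u v ∅ ∅) b} :=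
  ⟨stripAt u v c.1, isEdgeColoring_stripAt c.2.1⟩

def stripFreeFiberEquiv (huv : u ≠ v) (hus : u ∉ s) (hvs : v ∉ s) (hut : u ∉ t) (hvt : v ∉ t)
    (b : {b : V → V → Fin r // IsEdgeColoring (G.replaceNbhds u v ∅ ∅) b}) :
    {c : FreeColoring r p (G.replaceNbhds u v s t) // stripFree c = b} ≃
      {a // IsFreeExtension p G u v s b.1 a} × {a // IsFreeExtension p G v u t b.1 a} where
  toFun c :=
    have hc := c.1.2.1
    have hfree := (not_containsPattern_iff_of_stripAt_eq huv hvs hut hc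
      (congrArg Subtype.val c.2)).1 c.1.2.2
    (⟨c.1.1 u, hc.support_subset_left huv hus hut, hfree.1⟩,
      ⟨c.1.1 v, hc.support_subset_right huv hvs hvt, hfree.2⟩)
  invFun a :=
    ⟨⟨glueAt u v b a.1.1 a.2.1,
      isEdgeColoring_glueAt huv hus hut hvt b.2 a.1.2.1 a.2.2.1,
      (not_containsPattern_glueAt_iff huv hvs hut b a.1.1 a.2.1).2 ⟨a.1.2.2, a.2.2.2⟩⟩,
      Subtype.ext (stripAt_glueAt (b.2.apply_left_eq_zero huv)
        (b.2.apply_right_eq_zero huv))⟩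
  left_inv c := by
    obtain ⟨⟨c, hc, -⟩, rfl⟩ := c
    exact Subtype.ext (Subtype.ext (glueAt_stripAt hc.1))
  right_inv a := by
    have hau : a.1.1 v = 0 := Function.notMem_support.1 fun h => hvs (a.1.2.1 h)
    have hav : a.2.1 u = 0 := Function.notMem_support.1 fun h => hut (a.2.2.1 h)
    exact Prod.ext (Subtype.ext glueAt_apply_left)
      (Subtype.ext (glueAt_apply_right huv (hau.trans hav.symm)))

open scoped Classical in
theorem colCount_replaceNbhds [Fintype V] (huv : u ≠ v) (hus : u ∉ s) (hvs : v ∉ s)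
    (hut : u ∉ t) (hvt : v ∉ t) :
    colCount r p (G.replaceNbhds u v s t) =
      ∑ b : {b : V → V → Fin r // IsEdgeColoring (G.replaceNbhds u v ∅ ∅) b},
        Nat.card {a // IsFreeExtension p G u v s b.1 a} *
          Nat.card {a // IsFreeExtension p G v u t b.1 a} := by
  rw [colCount, ← Nat.card_congr (Equiv.sigmaFiberEquiv (stripFree (p := p) (s := s) (t := t))),
    Nat.card_sigma]
  exact Finset.sum_congr rfl fun b _ => by
    rw [Nat.card_congr (stripFreeFiberEquiv huv hus hvs hut hvt b), Nat.card_prod]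

theorem card_isFreeExtension_comm (huv : u ≠ v) (hus : u ∉ s) (hvs : v ∉ s)
    {b : V → V → Fin r} (hb : IsEdgeColoring (G.replaceNbhds u v ∅ ∅) b) :
    Nat.card {a // IsFreeExtension p G v u s b a} =
      Nat.card {a // IsFreeExtension p G u v s b a} := by
  refine Nat.card_congr (Equiv.subtypeEquivRight fun a => and_congr_right fun ha => not_congr ?_)
  let e := G.replaceNbhdsSwapIso hvs hus (Set.notMem_empty v) (Set.notMem_empty u)
  have he : e '' {u}ᶜ = {v}ᶜ := by
    rw [Set.image_compl_eq e.bijective, Set.image_singleton]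
    exact congrArg _ (congrArg _ (Equiv.swap_apply_right v u))
  have hau : a u = 0 := Function.notMem_support.1 fun h => hus (ha h)
  have hav : a v = 0 := Function.notMem_support.1 fun h => hvs (ha h)
  have hbu := hb.apply_left_eq_zero huv
  have hbv := hb.apply_right_eq_zero huv
  have hc : ∀ x y, recolorAt u a b (e x) (e y) = recolorAt v a b x y := by
    intro x y
    simp only [e, replaceNbhdsSwapIso, RelIso.coe_fn_mk, Equiv.swap_apply_def, recolorAt]
    split_ifs <;> simp_all
  rw [← ContainsPatternOn.iso_iff e hc, he]

theorem colCount_replaceNbhds_sq_le [Fintype V] (huv : u ≠ v) (hus : u ∉ s) (hvs : v ∉ s)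
    (hut : u ∉ t) (hvt : v ∉ t) :
    colCount r p (G.replaceNbhds u v s t) ^ 2 ≤
      colCount r p (G.replaceNbhds u v s s) * colCount r p (G.replaceNbhds u v t t) := by
  classical
  rw [colCount_replaceNbhds huv hus hvs hut hvt, colCount_replaceNbhds huv hus hvs hus hvs,
    colCount_replaceNbhds huv hut hvt hut hvt]
  refine (Finset.sum_mul_sq_le_sq_mul_sq _ _ _).trans_eq (congrArg₂ _ ?_ ?_) <;>
    refine Finset.sum_congr rfl fun b _ => ?_
  · rw [sq, card_isFreeExtension_comm huv hus hvs b.2]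
  · rw [sq, card_isFreeExtension_comm huv hut hvt b.2]

end FreeColorings

theorem statement6_general {V : Type*} [Fintype V] (r k : ℕ) (hr : 2 ≤ r)
    (p : Fin k → Fin k → Fin r)
    (G : SimpleGraph V) (hext : IsExtremalGraph r p G)
    (u v : V) (huv : u ≠ v) (hnadj : ¬ G.Adj u v)
    (G' : SimpleGraph V)
    (hG' : ∀ x y, G'.Adj x y ↔
      ((x ≠ v ∧ y ≠ v ∧ G.Adj x y) ∨
       (x = v ∧ y ≠ v ∧ G.Adj u y) ∨
       (x ≠ v ∧ y = v ∧ G.Adj x u))) :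
    IsExtremalGraph r p G' := by
  classical
  have : NeZero r := ⟨by omega⟩
  have hvu : v ∉ G.neighborSet u := fun h => hnadj h
  have huv' : u ∉ G.neighborSet v := fun h => hnadj h.symm
  have hG : G = G.replaceNbhds u v (G.neighborSet u) (G.neighborSet v) :=
    eq_replaceNbhds G huv G.notMem_neighborSet_self hvu huv' G.notMem_neighborSet_self
      (fun _ _ _ _ _ _ => Iff.rfl) rfl rfl
  have hG'eq : G' = G.replaceNbhds u v (G.neighborSet u) (G.neighborSet u) := by
    refine eq_replaceNbhds G huv G.notMem_neighborSet_self hvu G.notMem_neighborSet_self hvu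
      (fun x y _ hx _ hy => by simp [hG', hx, hy]) ?_ ?_ <;> ext y
    all_goals
      simpa [hG', huv, G.irrefl] using fun h (hy : y = v) => hnadj (hy ▸ h)
  have hsq := colCount_replaceNbhds_sq_le (r := r) (p := p) (G := G) huv
    G.notMem_neighborSet_self hvu huv' G.notMem_neighborSet_self
  rw [← hG, ← hG'eq] at hsq
  have hle := hext.colCount_le (G.replaceNbhds u v (G.neighborSet v) (G.neighborSet v))
  have hGG' : colCount r p G ≤ colCount r p G' := by nlinarith
  exact fun H => (hext H).trans hGG'

/-- If `G` is `(r,p)`-extremal and `u, v` are distinct non-adjacent vertices, then the graph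
`G'` obtained from `G` by deleting `v` and adding a twin of `u` in its place (the new
vertex is non-adjacent to `u` and adjacent exactly to the neighbors of `u`) is also
`(r,p)`-extremal (it has the same number `n` of vertices). -/
theorem statement6 {V : Type*} [Fintype V] (r k : ℕ) (hr : 2 ≤ r) (hk : 3 ≤ k)
    (p : Fin k → Fin k → Fin r) (hpsymm : ∀ i j, p i j = p j i)
    (G : SimpleGraph V) (hext : IsExtremalGraph r p G)
    (u v : V) (huv : u ≠ v) (hnadj : ¬ G.Adj u v)
    (G' : SimpleGraph V)
    (hG' : ∀ x y, G'.Adj x y ↔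
      ((x ≠ v ∧ y ≠ v ∧ G.Adj x y) ∨
       (x = v ∧ y ≠ v ∧ G.Adj u y) ∨
       (x ≠ v ∧ y = v ∧ G.Adj x u))) :
    IsExtremalGraph r p G' :=
  statement6_general r k hr p G hext u v huv hnadj G' hG'
end

section
/- For every n ≥ 2, the number of 3-edge-colorings of the complete graph K_n containing no rainbow triangle satisfies c_{3,F̂₃}(K_n) ≤ 3·(n−1)!·2^{n(n−1)/2 − 1}. -/
open SimpleGraph

/-- The rainbow pattern `F̂₃` of `K_3`: every edge is in its own class (for distinct `i, j`,
the values `0+1`, `0+2`, `1+2` in `Fin 3` are pairwise distinct). -/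
def rainbowPat : Fin 3 → Fin 3 → Fin 3 := fun i j => i + j

/-!
Add a new vertex to a coloring `χ` of `K_m`; the colors `f` of its `m` edges must leave every
triangle through it non-rainbow. Forgetting the last old vertex `x`, an admissible `f'` extends in
at most two ways (the triangle through a vertex `u` with `f' u ≠ χ u x` forces
`f x ∈ {f' u, χ u x}`), except the single `f'` that copies the colors `χ · x`, which extends in
at most three. So fewer than `2 ^ (m + 1)` extensions are admissible, and since
`2 ^ (m + 1) ≤ m * 2 ^ m` for `m ≥ 2`, induction from the `3` colorings of `K_2` gives the
bound.
-/

open Finset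
open scoped Nat

section RainbowFree

variable {V W α : Type*}

def IsRainbowFree (c : V → V → α) : Prop :=
  ∀ u v w, u ≠ v → u ≠ w → v ≠ w → c u v = c u w ∨ c u v = c v w ∨ c u w = c v w

/-- `f u` is the color of the edge from `u` to a new vertex; the condition says that the new
vertex lies in no rainbow triangle. -/
def IsRainbowFreeExtension (χ : V → V → α) (f : V → α) : Prop :=
  ∀ u v, u ≠ v → f u = f v ∨ f u = χ u v ∨ f v = χ u v

instance [Fintype V] [DecidableEq V] [DecidableEq α] :
    DecidablePred (IsRainbowFree (V := V) (α := α)) :=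
  fun _ => by unfold IsRainbowFree; infer_instance

instance [Fintype V] [DecidableEq V] [DecidableEq α] (χ : V → V → α) :
    DecidablePred (IsRainbowFreeExtension χ) :=
  fun _ => by unfold IsRainbowFreeExtension; infer_instance

theorem IsRainbowFree.comp {c : V → V → α} (hc : IsRainbowFree c) {e : W → V}
    (he : e.Injective) : IsRainbowFree fun u v => c (e u) (e v) :=
  fun _ _ _ huv huw hvw => hc _ _ _ (he.ne huv) (he.ne huw) (he.ne hvw)

theorem IsRainbowFreeExtension.comp {χ : V → V → α} {f : V → α}
    (hf : IsRainbowFreeExtension χ f) {e : W → V} (he : e.Injective) :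
    IsRainbowFreeExtension (fun u v => χ (e u) (e v)) (f ∘ e) :=
  fun _ _ huv => hf _ _ (he.ne huv)

theorem IsRainbowFree.isRainbowFreeExtension_last {n : ℕ} {c : Fin (n + 1) → Fin (n + 1) → α}
    (hc : IsRainbowFree c) :
    IsRainbowFreeExtension (fun u v : Fin n => c u.castSucc v.castSucc)
      (fun u : Fin n => c u.castSucc (Fin.last n)) := by
  intro u v huv
  rcases hc _ _ _ (Fin.castSucc_injective n |>.ne huv) (Fin.castSucc_lt_last u).ne
    (Fin.castSucc_lt_last v).ne with h | h | h
  · exact Or.inr (Or.inl h.symm)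
  · exact Or.inr (Or.inr h.symm)
  · exact Or.inl h

theorem containsPattern_rainbowPat {r : ℕ} {G : SimpleGraph V} {c : V → V → Fin r}
    (hs : ∀ u v, c u v = c v u) {u v w : V} (huv : G.Adj u v) (huw : G.Adj u w)
    (hvw : G.Adj v w) (h₁ : c u v ≠ c u w) (h₂ : c u v ≠ c v w) (h₃ : c u w ≠ c v w) :
    ContainsPattern G rainbowPat c := by
  have hinj : Function.Injective ![u, v, w] := by
    intro i j hij
    fin_cases i <;> fin_cases j <;>
      simp_all [huv.ne, huw.ne, hvw.ne, huv.ne.symm, huw.ne.symm, hvw.ne.symm]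
  refine ⟨![u, v, w], fun _ => Set.mem_univ _, hinj, ?_, ?_⟩
  · intro i j hij
    fin_cases i <;> fin_cases j <;> simp_all [G.adj_comm]
  · intro i j i' j' hij hij'
    fin_cases i <;> fin_cases j <;> fin_cases i' <;> fin_cases j' <;>
      simp_all [rainbowPat, hs v u, hs w u, hs w v, Ne.symm h₁, Ne.symm h₂, Ne.symm h₃]

theorem isRainbowFree_of_not_containsPattern {r : ℕ} {c : V → V → Fin r}
    (hs : ∀ u v, c u v = c v u) (h : ¬ ContainsPattern (⊤ : SimpleGraph V) rainbowPat c) :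
    IsRainbowFree c := by
  intro u v w huv huw hvw
  by_contra! hne
  exact h (containsPattern_rainbowPat hs huv huw hvw hne.1 hne.2.1 hne.2.2)

end RainbowFree

theorem card_filter_init_eq_le {α : Type*} [DecidableEq α] {m : ℕ}
    {s : Finset (Fin (m + 1) → α)} {A : Finset α} (f' : Fin m → α)
    (hA : ∀ f ∈ s, Fin.init f = f' → f (Fin.last m) ∈ A) :
    #{f ∈ s | Fin.init f = f'} ≤ #A := by
  refine card_le_card_of_injOn (· (Fin.last m)) (fun f hf => ?_) fun f hf g hg hfg => ?_
  · rw [coe_filter] at hf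
    exact hA f hf.1 hf.2
  · rw [coe_filter] at hf hg
    rw [← Fin.snoc_init_self f, ← Fin.snoc_init_self g, hf.2, hg.2]
    exact congrArg _ hfg

theorem card_rainbowFreeExtensions_lt (m : ℕ) (χ : Fin m → Fin m → Fin 3) :
    #{f | IsRainbowFreeExtension χ f} < 2 ^ (m + 1) := by
  induction m with
  | zero => exact (card_filter_le _ _).trans_lt (by simp)
  | succ m ih =>
    set χ' := fun u v : Fin m => χ u.castSucc v.castSucc
    set g := fun u : Fin m => χ u.castSucc (Fin.last m)
    have hmaps : ∀ f ∈ ({f | IsRainbowFreeExtension χ f} : Finset _),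
        Fin.init f ∈ ({f | IsRainbowFreeExtension χ' f} : Finset _) := fun f hf => by
      simp only [mem_filter, mem_univ, true_and] at hf ⊢
      exact hf.comp (Fin.castSucc_injective m)
    have hfiber : ∀ f' ∈ ({f | IsRainbowFreeExtension χ' f} : Finset _),
        #{f ∈ {f | IsRainbowFreeExtension χ f} | Fin.init f = f'} ≤
          2 + if f' = g then 1 else 0 := by
      intro f' _
      split_ifs with hg
      · exact (card_filter_init_eq_le (A := univ) f' fun _ _ _ => mem_univ _).trans_eq
          (by rw [card_univ, Fintype.card_fin])
      · obtain ⟨u, hu⟩ := Function.ne_iff.mp hg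
        refine (card_filter_init_eq_le (A := {f' u, g u}) f' fun f hf hinit => ?_).trans
          card_le_two
        subst hinit
        simp only [mem_filter, mem_univ, true_and] at hf
        rcases hf u.castSucc (Fin.last m) (Fin.castSucc_lt_last u).ne with h | h | h
        · simp [Fin.init, h]
        · exact absurd h hu
        · simp [h, g]
    calc #{f | IsRainbowFreeExtension χ f}
        = ∑ f' ∈ {f | IsRainbowFreeExtension χ' f},
            #{f ∈ {f | IsRainbowFreeExtension χ f} | Fin.init f = f'} :=
          card_eq_sum_card_fiberwise hmaps
      _ ≤ ∑ f' ∈ {f | IsRainbowFreeExtension χ' f}, (2 + if f' = g then 1 else 0) :=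
          sum_le_sum hfiber
      _ ≤ 2 * #{f | IsRainbowFreeExtension χ' f} + 1 := by
          rw [sum_add_distrib, sum_const, sum_ite_eq', smul_eq_mul, mul_comm]
          split_ifs <;> omega
      _ < 2 ^ (m + 1 + 1) := by
          have := ih χ'
          rw [pow_succ]
          omega

instance {V : Type*} {r : ℕ} [Fintype V] [DecidableEq V] (G : SimpleGraph V)
    [DecidableRel G.Adj] : DecidablePred (IsEdgeColoring (r := r) G) :=
  fun _ => by unfold IsEdgeColoring; infer_instance

def rainbowFreeColorings (n : ℕ) : Finset (Fin n → Fin n → Fin 3) :=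
  {c | IsEdgeColoring ⊤ c ∧ IsRainbowFree c}

theorem IsEdgeColoring.comp_top {V W : Type*} {r : ℕ} {c : V → V → Fin r}
    (hc : IsEdgeColoring ⊤ c) (e : W → V) : IsEdgeColoring ⊤ fun u v => c (e u) (e v) :=
  ⟨fun _ _ => hc.1 _ _, fun _ _ h => hc.2 _ _ (by simp_all)⟩

theorem IsEdgeColoring.eq_of_castSucc_eq {n r : ℕ} {c d : Fin (n + 1) → Fin (n + 1) → Fin r}
    (hc : IsEdgeColoring ⊤ c) (hd : IsEdgeColoring ⊤ d)
    (hrestr : (fun u v : Fin n => c u.castSucc v.castSucc) = fun u v => d u.castSucc v.castSucc)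
    (hlast : (fun u : Fin n => c u.castSucc (Fin.last n)) = fun u => d u.castSucc (Fin.last n)) :
    c = d := by
  funext u v
  induction u using Fin.lastCases with
  | last =>
    induction v using Fin.lastCases with
    | last => exact Fin.ext ((hc.2 _ _ (by simp)).trans (hd.2 _ _ (by simp)).symm)
    | cast j => rw [hc.1, hd.1]; exact congrFun hlast j
  | cast i =>
    induction v using Fin.lastCases with
    | last => exact congrFun hlast i
    | cast j => exact congrFun₂ hrestr i j

theorem card_rainbowFreeColorings_two : #(rainbowFreeColorings 2) ≤ 3 := by
  refine (card_le_card_of_injOn (fun c => c 0 1) (t := univ) (fun _ _ => mem_univ _)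
    fun c hc d hd h => ?_).trans_eq (by rw [card_univ, Fintype.card_fin])
  simp only [rainbowFreeColorings, mem_coe, mem_filter, mem_univ, true_and] at hc hd
  funext u v
  fin_cases u <;> fin_cases v
  · exact Fin.ext ((hc.1.2 _ _ (by simp)).trans (hd.1.2 _ _ (by simp)).symm)
  · exact h
  · rw [hc.1.1, hd.1.1]; exact h
  · exact Fin.ext ((hc.1.2 _ _ (by simp)).trans (hd.1.2 _ _ (by simp)).symm)

theorem card_rainbowFreeColorings_succ_le (n : ℕ) :
    #(rainbowFreeColorings (n + 1)) ≤ 2 ^ (n + 1) * #(rainbowFreeColorings n) := by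
  refine card_le_mul_card_image_of_maps_to
    (f := fun c u v => c (Fin.castSucc u) (Fin.castSucc v)) (fun c hc => ?_) _ fun c' _ => ?_
  · simp only [rainbowFreeColorings, mem_filter, mem_univ, true_and] at hc ⊢
    exact ⟨hc.1.comp_top _, hc.2.comp (Fin.castSucc_injective n)⟩
  · refine (card_le_card_of_injOn (fun c u => c u.castSucc (Fin.last n))
      (t := {f | IsRainbowFreeExtension c' f}) (fun c hc => ?_) fun c hc d hd h => ?_).trans
      (card_rainbowFreeExtensions_lt n c').le
    · simp only [rainbowFreeColorings, mem_coe, mem_filter, mem_univ, true_and] at hc ⊢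
      obtain ⟨⟨-, hrf⟩, rfl⟩ := hc
      exact hrf.isRainbowFreeExtension_last
    · simp only [rainbowFreeColorings, mem_coe, mem_filter, mem_univ, true_and] at hc hd
      exact hc.1.1.eq_of_castSucc_eq hd.1.1 (hc.2.trans hd.2.symm) h

theorem card_rainbowFreeColorings_le {n : ℕ} (hn : 2 ≤ n) :
    #(rainbowFreeColorings n) ≤ 3 * (n - 1)! * 2 ^ (n * (n - 1) / 2 - 1) := by
  induction n, hn using Nat.le_induction with
  | base => simpa using card_rainbowFreeColorings_two
  | succ n hn ih =>
    have hpow : 2 ^ (n + 1) ≤ n * 2 ^ n := by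
      rw [pow_succ, mul_comm]
      exact Nat.mul_le_mul_right _ hn
    have hexp : (n + 1) * (n + 1 - 1) / 2 - 1 = n * (n - 1) / 2 - 1 + n := by
      have : 1 ≤ n * (n - 1) / 2 :=
        (Nat.le_div_iff_mul_le two_pos).2 <| by
          simpa [mul_comm] using Nat.mul_le_mul hn (by omega : 1 ≤ n - 1)
      rw [Nat.triangle_succ]
      omega
    calc #(rainbowFreeColorings (n + 1))
        ≤ 2 ^ (n + 1) * #(rainbowFreeColorings n) := card_rainbowFreeColorings_succ_le n
      _ ≤ n * 2 ^ n * (3 * (n - 1)! * 2 ^ (n * (n - 1) / 2 - 1)) := Nat.mul_le_mul hpow ih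
      _ = 3 * (n + 1 - 1)! * 2 ^ ((n + 1) * (n + 1 - 1) / 2 - 1) := by
        rw [hexp, pow_add, Nat.add_sub_cancel, ← Nat.mul_factorial_pred (by omega : n ≠ 0)]
        ring

theorem colCount_rainbowPat_top_le (n : ℕ) :
    colCount 3 rainbowPat (⊤ : SimpleGraph (Fin n)) ≤ #(rainbowFreeColorings n) := by
  classical
  rw [colCount, Nat.card_eq_fintype_card, Fintype.card_subtype]
  refine card_le_card fun c hc => ?_
  simp only [rainbowFreeColorings, mem_filter, mem_univ, true_and] at hc ⊢
  exact ⟨hc.1, isRainbowFree_of_not_containsPattern hc.1.1 hc.2⟩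

/-- For every `n ≥ 2`, the number of 3-edge-colorings of `K_n` with no rainbow triangle is
at most `3 · (n-1)! · 2 ^ (n(n-1)/2 - 1)`. -/
theorem statement14 (n : ℕ) (hn : 2 ≤ n) :
    colCount 3 rainbowPat (⊤ : SimpleGraph (Fin n)) ≤
      3 * Nat.factorial (n - 1) * 2 ^ (n * (n - 1) / 2 - 1) :=
  (colCount_rainbowPat_top_le n).trans (card_rainbowFreeColorings_le hn)
end
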